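/- Let G be a finite graph, M a module of G, and X a minimal forbidden set of G with |X| > 4. Then either X ⊆ M, or |M ∩ X| ≤ 1. -/

import Mathlib

/-- A graph is an interval graph if each vertex can be assigned a (nonempty) closed real
interval such that two distinct vertices are adjacent iff their intervals intersect. -/
def IsIntervalGraph {V : Type*} (G : SimpleGraph V) : Prop :=
  ∃ f : V → Set ℝ,
    (∀ v, ∃ a b : ℝ, a ≤ b ∧ f v = Set.Icc a b) ∧
    ∀ u v : V, u ≠ v → (G.Adj u v ↔ (f u ∩ f v).Nonempty)

/-- A hole is an induced (chordless) cycle on at least 4 vertices, identified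
with its vertex set. -/
def IsHole {V : Type*} (G : SimpleGraph V) (H : Set V) : Prop :=
  ∃ m : ℕ, 4 ≤ m ∧ ∃ f : ZMod m → V,
    Function.Injective f ∧ Set.range f = H ∧
      ∀ i j : ZMod m, G.Adj (f i) (f j) ↔ (j = i + 1 ∨ i = j + 1)

/-- A minimal forbidden set: the induced subgraph is not interval, but every
proper subset induces an interval graph. -/
def IsMinimalForbidden {V : Type*} (G : SimpleGraph V) (X : Set V) : Prop :=
  ¬ IsIntervalGraph (G.induce X) ∧ ∀ Y : Set V, Y ⊂ X → IsIntervalGraph (G.induce Y)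

/-- A graph is prereduced if it has no minimal forbidden set of at most 10 vertices. -/
def Prereduced {V : Type*} (G : SimpleGraph V) : Prop :=
  ∀ X : Set V, X.ncard ≤ 10 → ¬ IsMinimalForbidden G X

/-- A module: any two vertices of `M` have exactly the same neighbors outside `M`. -/
def IsGraphModule {V : Type*} (G : SimpleGraph V) (M : Set V) : Prop :=
  ∀ u ∈ M, ∀ v ∈ M, ∀ x ∉ M, (G.Adj u x ↔ G.Adj v x)

/-- A graph is reduced if it is prereduced and every nontrivial module induces a clique. -/
def Reduced {V : Type*} [Fintype V] (G : SimpleGraph V) : Prop :=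
  Prereduced G ∧
    ∀ M : Set V, IsGraphModule G M → 1 < M.ncard → M.ncard < Fintype.card V →
      G.IsClique M

/-- Closed neighborhood `N[v]`. -/
def closedNbhd {V : Type*} (G : SimpleGraph V) (v : V) : Set V :=
  insert v (G.neighborSet v)

/-- Closed neighborhood of a set, `N[U] = ⋃ v ∈ U, N[v]`. -/
def closedNbhdSet {V : Type*} (G : SimpleGraph V) (U : Set V) : Set V :=
  ⋃ v ∈ U, closedNbhd G v

/-- The set of common neighbors of a vertex set `X`. -/
def commonNbrs {V : Type*} (G : SimpleGraph V) (X : Set V) : Set V :=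
  {v | ∀ x ∈ X, G.Adj v x}

/-- `P` induces a chordless path: it can be enumerated so that adjacency holds
exactly between consecutive vertices. -/
def IsInducedPath {V : Type*} (G : SimpleGraph V) (P : Set V) : Prop :=
  ∃ n : ℕ, ∃ f : Fin (n + 1) → V, Function.Injective f ∧ Set.range f = P ∧
    ∀ i j : Fin (n + 1), G.Adj (f i) (f j) ↔ (i.val + 1 = j.val ∨ j.val + 1 = i.val)

/-- A shallow terminal: a vertex `s` contained in a minimal forbidden set `W` that is
not a hole, such that `W \ N[s]` induces a chordless path. -/
def ShallowTerminal {V : Type*} (G : SimpleGraph V) (s : V) : Prop :=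
  ∃ W : Set V, IsMinimalForbidden G W ∧ s ∈ W ∧ ¬ IsHole G W ∧
    IsInducedPath G (W \ closedNbhd G s)

/-- A hole cover: a vertex set intersecting every hole. -/
def HoleCover {V : Type*} (G : SimpleGraph V) (C : Set V) : Prop :=
  ∀ H : Set V, IsHole G H → (C ∩ H).Nonempty

/-- A minimal hole cover: a hole cover no proper subset of which is a hole cover. -/
def MinimalHoleCover {V : Type*} (G : SimpleGraph V) (C : Set V) : Prop :=
  HoleCover G C ∧ ∀ C' : Set V, C' ⊂ C → ¬ HoleCover G C'

/-- An interval deletion set: a vertex set whose removal leaves an interval graph. -/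
def IntervalDeletionSet {V : Type*} (G : SimpleGraph V) (Q : Set V) : Prop :=
  IsIntervalGraph (G.induce Qᶜ)

/-- A minimum interval deletion set. -/
def MinIntervalDeletionSet {V : Type*} (G : SimpleGraph V) (Q : Set V) : Prop :=
  IntervalDeletionSet G Q ∧
    ∀ Q' : Set V, IntervalDeletionSet G Q' → Q.ncard ≤ Q'.ncard

/-- Two holes are congenial if each is contained in the closed neighborhood of the other. -/
def Congenial {V : Type*} (G : SimpleGraph V) (H₁ H₂ : Set V) : Prop :=
  H₁ ⊆ closedNbhdSet G H₂ ∧ H₂ ⊆ closedNbhdSet G H₁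

/-- The graph `G − S`: edges of `G` with both endpoints outside `S`
(vertices of `S` become isolated). -/
def deleteSet {V : Type*} (G : SimpleGraph V) (S : Set V) : SimpleGraph V where
  Adj u v := G.Adj u v ∧ u ∉ S ∧ v ∉ S
  symm := ⟨fun u v h => ⟨h.1.symm, h.2.2, h.2.1⟩⟩
  loopless := ⟨fun v h => h.1.ne rfl⟩

/-!
Let `A = M ∩ X` contain two vertices and pick `u ∈ A`. As `M` is a module, every vertex of `A` sees
`X \ A` exactly as `u` does, so `G[X]` arises from the interval graph on the proper subset
`(X \ A) ∪ {u}` by substituting `G[A]` for `u`. If `A` is a clique, all of `A` can reuse the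
interval of `u`. Otherwise `A ≠ X` is itself interval, and the neighbours of `u` outside `A` form a
clique: two nonadjacent ones, with two nonadjacent vertices of `A`, would span an induced `C₄`, a
proper subset of `X` because `4 < |X|`. By Helly some point `p` lies in exactly the intervals of
the neighbours of `u`, and a squeezed copy of the model of `A` fits into the line blown up at `p`.
Either way `G[X]` would be an interval graph.
-/

open Set Real

section

variable {V : Type*} {G : SimpleGraph V}

/-- An interval model `v ↦ [a v, b v]` of `G.induce Y`, with intersection of intervals spelled out
as inequalities between endpoints. -/
structure IsIntervalModel (G : SimpleGraph V) (Y : Set V) (a b : V → ℝ) : Prop where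
  le : ∀ v ∈ Y, a v ≤ b v
  adj_iff : ∀ u ∈ Y, ∀ v ∈ Y, u ≠ v → (G.Adj u v ↔ a u ≤ b v ∧ a v ≤ b u)

theorem isIntervalGraph_induce_iff {Y : Set V} :
    IsIntervalGraph (G.induce Y) ↔ ∃ a b : V → ℝ, IsIntervalModel G Y a b := by
  classical
  constructor
  · rintro ⟨f, hf, hadj⟩
    choose a b hab hf using hf
    refine ⟨fun v => if h : v ∈ Y then a ⟨v, h⟩ else 0,
      fun v => if h : v ∈ Y then b ⟨v, h⟩ else 0,
      ⟨fun v hv => by simpa [hv] using hab _, ?_⟩⟩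
    intro u hu v hv huv
    have := hadj ⟨u, hu⟩ ⟨v, hv⟩ (by simpa using huv)
    simpa [hu, hv, hf, Icc_inter_Icc, sup_le_iff, le_inf_iff, hab, and_comm, and_left_comm]
      using this
  · rintro ⟨a, b, hY⟩
    refine ⟨fun v => Icc (a v) (b v), fun v => ⟨a v, b v, hY.le v v.2, rfl⟩, ?_⟩
    rintro ⟨u, hu⟩ ⟨v, hv⟩ huv
    have := hY.adj_iff u hu v hv (by simpa using huv)
    simp only [SimpleGraph.comap_adj, Function.Embedding.subtype_apply, this, Icc_inter_Icc,
      nonempty_Icc, sup_le_iff, le_inf_iff, hY.le u hu, hY.le v hv, true_and, and_true]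
    exact and_comm

namespace IsIntervalModel

variable {Y A : Set V} {a b c d : V → ℝ}

theorem comp_strictMono (h : IsIntervalModel G Y a b) {g : ℝ → ℝ} (hg : StrictMono g) :
    IsIntervalModel G Y (g ∘ a) (g ∘ b) where
  le v hv := hg.monotone (h.le v hv)
  adj_iff u hu v hv huv := by simp only [Function.comp, hg.le_iff_le, h.adj_iff u hu v hv huv]

/-- Interval graphs contain no induced `C₄`. -/
theorem adj_of_nonadj_common_nbrs (h : IsIntervalModel G Y a b) {u v x y : V}
    (hu : u ∈ Y) (hv : v ∈ Y) (hx : x ∈ Y) (hy : y ∈ Y) (huv : u ≠ v) (hxy : x ≠ y)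
    (hnuv : ¬ G.Adj u v) (hux : G.Adj u x) (huy : G.Adj u y) (hvx : G.Adj v x)
    (hvy : G.Adj v y) : G.Adj x y := by
  rw [h.adj_iff u hu v hv huv] at hnuv
  rw [h.adj_iff u hu x hx hux.ne] at hux
  rw [h.adj_iff u hu y hy huy.ne] at huy
  rw [h.adj_iff v hv x hx hvx.ne] at hvx
  rw [h.adj_iff v hv y hy hvy.ne] at hvy
  rw [h.adj_iff x hx y hy hxy]
  have := h.le u hu
  have := h.le v hv
  rcases not_and_or.mp hnuv with hvu | hvu <;> constructor <;> linarith

/-- Helly: the largest left endpoint among `u` and its neighbours lies in all their intervals. -/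
theorem exists_point_iff_adj (h : IsIntervalModel G Y a b) (hYfin : Y.Finite) {u : V}
    (hu : u ∈ Y) (hcl : ∀ x ∈ Y, ∀ y ∈ Y, x ≠ y → G.Adj u x → G.Adj u y → G.Adj x y) :
    ∃ p, ∀ z ∈ Y, z ≠ u → (G.Adj u z ↔ a z ≤ p ∧ p ≤ b z) := by
  set S := {z ∈ Y | z = u ∨ G.Adj u z}
  have hS : ∀ x ∈ S, ∀ y ∈ S, x ≠ y → G.Adj x y := by
    rintro x ⟨hx, rfl | hux⟩ y ⟨hy, rfl | huy⟩ hxy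
    exacts [absurd rfl hxy, huy, hux.symm, hcl x hx y hy hxy hux huy]
  obtain ⟨m, ⟨hmY, hm⟩, hmax⟩ :=
    S.exists_max_image a (hYfin.subset fun _ hz => hz.1) ⟨u, hu, Or.inl rfl⟩
  have hmS : ∀ w ∈ S, a m ≤ b w := by
    intro w hw
    rcases eq_or_ne m w with rfl | hmw
    · exact h.le m hmY
    · exact ((h.adj_iff m hmY w hw.1 hmw).1 (hS m ⟨hmY, hm⟩ w hw hmw)).1
  refine ⟨a m, fun z hz hzu => ⟨fun huz => ⟨hmax z ⟨hz, Or.inr huz⟩, hmS z ⟨hz, Or.inr huz⟩⟩,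
    fun hp => ?_⟩⟩
  rw [h.adj_iff u hu z hz hzu.symm]
  exact ⟨(hmax u ⟨hu, Or.inl rfl⟩).trans hp.2, hp.1.trans (hmS u ⟨hu, Or.inl rfl⟩)⟩

theorem exists_union_of_isClique (h : IsIntervalModel G Y a b) {u : V} (huY : u ∈ Y)
    (huA : u ∈ A) (hA : G.IsClique A)
    (hmod : ∀ w ∈ A, ∀ z ∈ Y, z ∉ A → (G.Adj w z ↔ G.Adj u z)) :
    ∃ a' b', IsIntervalModel G (Y ∪ A) a' b' := by
  classical
  have key : ∀ w ∈ A, ∀ z ∈ Y, z ∉ A → (G.Adj w z ↔ a u ≤ b z ∧ a z ≤ b u) :=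
    fun w hw z hz hzA =>
      (hmod w hw z hz hzA).trans (h.adj_iff u huY z hz (ne_of_mem_of_not_mem huA hzA))
  refine ⟨fun z => if z ∈ A then a u else a z, fun z => if z ∈ A then b u else b z, ⟨?_, ?_⟩⟩
  · intro z hz
    by_cases hzA : z ∈ A
    · simpa only [hzA, if_true] using h.le u huY
    · simpa only [hzA, if_false] using h.le z (hz.resolve_right hzA)
  · intro z hz z' hz' hne
    by_cases hzA : z ∈ A <;> by_cases hz'A : z' ∈ A <;> simp only [hzA, hz'A, if_true, if_false]
    · exact iff_of_true (hA hzA hz'A hne) ⟨h.le u huY, h.le u huY⟩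
    · exact key z hzA z' (hz'.resolve_right hz'A) hz'A
    · rw [G.adj_comm, and_comm]
      exact key z' hz'A z (hz.resolve_right hzA) hzA
    · exact h.adj_iff z (hz.resolve_right hzA) z' (hz'.resolve_right hz'A) hne

/-- Blow the line up at `p` (shift everything right of `p` by `π`) and place a copy of the model
of `A`, squeezed by `arctan`, into the gap `(p, p + π)`. -/
theorem exists_union_of_adj_iff_mem (hY : IsIntervalModel G Y a b)
    (hA : IsIntervalModel G A c d) {p : ℝ}
    (hp : ∀ w ∈ A, ∀ z ∈ Y, z ∉ A → (G.Adj w z ↔ a z ≤ p ∧ p ≤ b z)) :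
    ∃ a' b', IsIntervalModel G (Y ∪ A) a' b' := by
  classical
  set g : ℝ → ℝ := fun t => p + π / 2 + arctan t
  have hg : StrictMono g := fun s t hst => by simpa [g] using arctan_strictMono hst
  have hgp : ∀ t, p < g t ∧ g t < p + π := fun t => by
    simp only [g]
    constructor <;> linarith [neg_pi_div_two_lt_arctan t, arctan_lt_pi_div_two t]
  have hA' := hA.comp_strictMono hg
  set lo : ℝ → ℝ := fun t => if t ≤ p then t else t + π
  set hi : ℝ → ℝ := fun t => if t < p then t else t + π
  have lo_le_hi : ∀ s t, lo s ≤ hi t ↔ s ≤ t := by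
    intro s t
    simp only [lo, hi]
    split_ifs <;> constructor <;> intro <;> linarith [pi_pos]
  have gap : ∀ s t x y, p < x ∧ x < p + π → p < y ∧ y < p + π →
      (x ≤ hi t ∧ lo s ≤ y ↔ s ≤ p ∧ p ≤ t) := by
    rintro s t x y ⟨hx, hx'⟩ ⟨hy, hy'⟩
    simp only [lo, hi]
    split_ifs <;> constructor <;> rintro ⟨h1, h2⟩ <;> constructor <;> linarith [pi_pos]
  have key : ∀ w ∈ A, ∀ z ∈ Y, z ∉ A →
      (G.Adj w z ↔ g (c w) ≤ hi (b z) ∧ lo (a z) ≤ g (d w)) := fun w hw z hz hzA =>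
    (hp w hw z hz hzA).trans (gap _ _ _ _ (hgp _) (hgp _)).symm
  refine ⟨fun z => if z ∈ A then g (c z) else lo (a z),
    fun z => if z ∈ A then g (d z) else hi (b z), ⟨?_, ?_⟩⟩
  · intro z hz
    by_cases hzA : z ∈ A
    · simpa only [hzA, if_true, Function.comp] using hA'.le z hzA
    · simpa only [hzA, if_false] using (lo_le_hi _ _).2 (hY.le z (hz.resolve_right hzA))
  · intro z hz z' hz' hne
    by_cases hzA : z ∈ A <;> by_cases hz'A : z' ∈ A <;> simp only [hzA, hz'A, if_true, if_false]
    · simpa only [Function.comp] using hA'.adj_iff z hzA z' hz'A hne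
    · exact key z hzA z' (hz'.resolve_right hz'A) hz'A
    · rw [G.adj_comm, and_comm]
      exact key z' hz'A z (hz.resolve_right hzA) hzA
    · rw [hY.adj_iff z (hz.resolve_right hzA) z' (hz'.resolve_right hz'A) hne, lo_le_hi,
        lo_le_hi]

end IsIntervalModel

namespace IsMinimalForbidden

variable {X A Y : Set V}

theorem not_isIntervalModel (hX : IsMinimalForbidden G X) (a b : V → ℝ) :
    ¬ IsIntervalModel G X a b :=
  fun h => hX.1 (isIntervalGraph_induce_iff.2 ⟨a, b, h⟩)

theorem exists_isIntervalModel (hX : IsMinimalForbidden G X) (hYX : Y ⊂ X) :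
    ∃ a b, IsIntervalModel G Y a b :=
  isIntervalGraph_induce_iff.1 (hX.2 Y hYX)

theorem exists_isIntervalModel_insert_diff (hX : IsMinimalForbidden G X) (hAX : A ⊆ X)
    {u v : V} (hu : u ∈ A) (hv : v ∈ A) (huv : u ≠ v) :
    ∃ a b, IsIntervalModel G (insert u (X \ A)) a b := by
  refine hX.exists_isIntervalModel
    ((ssubset_iff_of_subset (insert_subset (hAX hu) sdiff_subset)).2 ⟨v, hAX hv, ?_⟩)
  rintro (rfl | ⟨-, hvA⟩)
  exacts [huv rfl, hvA hv]

theorem adj_of_nonadj_common_nbrs (hX : IsMinimalForbidden G X) (hcard : 4 < X.ncard)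
    {u v x y : V} (hu : u ∈ X) (hv : v ∈ X) (hx : x ∈ X) (hy : y ∈ X) (huv : u ≠ v)
    (hxy : x ≠ y) (hnuv : ¬ G.Adj u v) (hux : G.Adj u x) (huy : G.Adj u y) (hvx : G.Adj v x)
    (hvy : G.Adj v y) : G.Adj x y := by
  classical
  have hS : ({u, v, x, y} : Set V).ncard ≤ 4 := by
    rw [← Finset.coe_pair, ← Finset.coe_insert, ← Finset.coe_insert, ncard_coe_finset]
    exact Finset.card_le_four
  have hSX : ({u, v, x, y} : Set V) ⊆ X := by simp [insert_subset_iff, *]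
  obtain ⟨a, b, h⟩ := hX.exists_isIntervalModel (hSX.ssubset_of_ne (by rintro rfl; omega))
  exact h.adj_of_nonadj_common_nbrs (by simp) (by simp) (by simp) (by simp) huv hxy hnuv hux huy
    hvx hvy

variable {M : Set V}

theorem not_isClique_inter (hX : IsMinimalForbidden G X) (hM : IsGraphModule G M) {u v : V}
    (hu : u ∈ M ∩ X) (hv : v ∈ M ∩ X) (huv : u ≠ v) : ¬ G.IsClique (M ∩ X) := by
  intro hA
  obtain ⟨a, b, hY⟩ := hX.exists_isIntervalModel_insert_diff inter_subset_right hu hv huv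
  obtain ⟨a', b', h⟩ := hY.exists_union_of_isClique (mem_insert u _) hu hA
    fun w hw z hz hzA =>
      hM w hw.1 u hu.1 z fun hzM => hzA ⟨hzM, insert_subset hu.2 sdiff_subset hz⟩
  rw [insert_union, sdiff_union_of_subset inter_subset_right, insert_eq_of_mem hu.2] at h
  exact hX.not_isIntervalModel _ _ h

theorem isClique_inter (hX : IsMinimalForbidden G X) (hM : IsGraphModule G M)
    (hcard : 4 < X.ncard) (hXM : ¬ X ⊆ M) : G.IsClique (M ∩ X) := by
  intro u hu v hv huv
  by_contra hnuv
  set A := M ∩ X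
  have hmod : ∀ w ∈ A, ∀ z ∈ X, z ∉ A → (G.Adj w z ↔ G.Adj u z) :=
    fun w hw z hz hzA => hM w hw.1 u hu.1 z fun hzM => hzA ⟨hzM, hz⟩
  obtain ⟨c, d, hA⟩ := hX.exists_isIntervalModel
    (inter_subset_right.ssubset_of_not_subset fun h => hXM fun x hx => (h hx).1)
  obtain ⟨a, b, hY⟩ := hX.exists_isIntervalModel_insert_diff inter_subset_right hu hv huv
  have hYX : insert u (X \ A) ⊆ X := insert_subset hu.2 sdiff_subset
  have hnbr : ∀ x ∈ insert u (X \ A), G.Adj u x → x ∈ X \ A :=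
    fun x hx hux => hx.resolve_left hux.ne'
  obtain ⟨p, hp⟩ := hY.exists_point_iff_adj ((finite_of_ncard_pos (by omega)).subset hYX)
    (mem_insert u _) fun x hx y hy hxy hux huy =>
      hX.adj_of_nonadj_common_nbrs hcard hu.2 hv.2 (hYX hx) (hYX hy) huv hxy hnuv hux huy
        ((hmod v hv x (hYX hx) (hnbr x hx hux).2).2 hux)
        ((hmod v hv y (hYX hy) (hnbr y hy huy).2).2 huy)
  obtain ⟨a', b', h⟩ := hY.exists_union_of_adj_iff_mem hA (p := p) fun w hw z hz hzA =>
    (hmod w hw z (hYX hz) hzA).trans (hp z hz fun hzu => hzA (hzu ▸ hu))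
  rw [insert_union, sdiff_union_of_subset inter_subset_right, insert_eq_of_mem hu.2] at h
  exact hX.not_isIntervalModel _ _ h

end IsMinimalForbidden

end

theorem stmt_5_general {V : Type*} (G : SimpleGraph V)
    (M : Set V) (hM : IsGraphModule G M)
    (X : Set V) (hX : IsMinimalForbidden G X) (hcard : 4 < X.ncard) :
    X ⊆ M ∨ (M ∩ X).ncard ≤ 1 := by
  refine or_iff_not_imp_left.2 fun hXM => ?_
  by_contra! h
  obtain ⟨u, hu, v, hv, huv⟩ := (one_lt_ncard (finite_of_ncard_pos (by omega))).1 h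
  exact hX.not_isClique_inter hM hu hv huv (hX.isClique_inter hM hcard hXM)

/-- A minimal forbidden set of more than 4 vertices is either contained in
a module or meets it in at most one vertex. -/
theorem stmt_5 {V : Type*} [Fintype V] (G : SimpleGraph V)
    (M : Set V) (hM : IsGraphModule G M)
    (X : Set V) (hX : IsMinimalForbidden G X) (hcard : 4 < X.ncard) :
    X ⊆ M ∨ (M ∩ X).ncard ≤ 1 :=
  stmt_5_general G M hM X hX hcard
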